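/- arXiv:1912.06483 — 4 statements merged into one kernel-verified Lean document; each statement's English description precedes it below -/
import Mathlib

section
/- Let n ≥ 2, q₀ ≥ 0 and let P: [q₀,∞) → ℝ^n be a proper generalized n-system. Let w_1 < w_2 < ⋯ be the points of (q₀,∞) at which P is not differentiable, listed in increasing order, and let E be the set of limit points of the sequence (w_i^{−1}P(w_i))_{i≥1}. Then K(P) is the convex hull of E. -/
open Set Filter Topology

noncomputable section

/-- Two affine maps agreeing at two distinct points are equal. -/
lemma affine_eq_of_two_pts {a b c d t₁ t₂ : ℝ} (h12 : t₁ ≠ t₂)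
    (h1 : a * t₁ + b = c * t₁ + d) (h2 : a * t₂ + b = c * t₂ + d) :
    a = c ∧ b = d := by
  constructor
  · have : (a - c) * (t₁ - t₂) = 0 := by ring_nf; linarith
    rcases mul_eq_zero.mp this with h | h
    · linarith
    · exact absurd (by linarith) h12
  · have hac : a = c := by
      have : (a - c) * (t₁ - t₂) = 0 := by ring_nf; linarith
      rcases mul_eq_zero.mp this with h | h
      · linarith
      · exact absurd (by linarith) h12
    rw [hac] at h1; linarith

/-- Local affineness at a differentiability point. -/
lemma locAffine {n : ℕ} {q₀ : ℝ} {P : ℝ → Fin n → ℝ}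
    (hloc : ∀ q ∈ Ici q₀, ∃ ε > 0, ∃ a b c d : Fin n → ℝ,
      (∀ t ∈ Ici q₀ ∩ Icc (q - ε) q, ∀ i, P t i = a i * t + b i) ∧
      (∀ t ∈ Ici q₀ ∩ Icc q (q + ε), ∀ i, P t i = c i * t + d i))
    {q : ℝ} (hq : q₀ < q) (hd : DifferentiableAt ℝ P q) :
    ∃ δ > 0, ∃ a b : Fin n → ℝ, q₀ < q - δ ∧
      ∀ t ∈ Icc (q - δ) (q + δ), ∀ i, P t i = a i * t + b i := by
  obtain ⟨ε, hε, a, b, c, d, hL, hR⟩ := hloc q (le_of_lt hq)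
  set δ := min (ε / 2) ((q - q₀) / 2) with hδdef
  have hδ : 0 < δ := lt_min (by linarith) (by linarith)
  have hδε : δ ≤ ε := le_trans (min_le_left _ _) (by linarith)
  have hδq : q₀ < q - δ := by
    have : δ ≤ (q - q₀) / 2 := min_le_right _ _
    linarith
  have hLformula : ∀ t ∈ Icc (q - δ) q, ∀ i, P t i = a i * t + b i := by
    intro t ht i
    refine hL t ⟨mem_Ici.mpr (le_of_lt (lt_of_lt_of_le hδq ht.1)), ?_, ht.2⟩ i
    linarith [ht.1]
  have hRformula : ∀ t ∈ Icc q (q + δ), ∀ i, P t i = c i * t + d i := by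
    intro t ht i
    refine hR t ⟨mem_Ici.mpr (by linarith [ht.1]), ht.1, by linarith [ht.2]⟩ i
  -- affine functions
  set fL : ℝ → Fin n → ℝ := fun t => fun i => a i * t + b i with hfL
  set fR : ℝ → Fin n → ℝ := fun t => fun i => c i * t + d i with hfR
  have hfLd : HasDerivAt fL a q := by
    rw [hasDerivAt_pi]
    intro i
    have h := ((hasDerivAt_id q).const_mul (a i)).add_const (b i)
    rw [mul_one] at h
    exact h
  have hfRd : HasDerivAt fR c q := by
    rw [hasDerivAt_pi]
    intro i
    have h := ((hasDerivAt_id q).const_mul (c i)).add_const (d i)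
    rw [mul_one] at h
    exact h
  have hmemL : Icc (q - δ) q ∈ nhdsWithin q (Iic q) :=
    Icc_mem_nhdsLE_of_mem ⟨by linarith, le_refl q⟩
  have hmemR : Icc q (q + δ) ∈ nhdsWithin q (Ici q) :=
    Icc_mem_nhdsGE_of_mem ⟨le_refl q, by linarith⟩
  have hPq : P q = fL q := by
    funext i; exact hLformula q ⟨by linarith, le_refl q⟩ i
  have hPqR : P q = fR q := by
    funext i; exact hRformula q ⟨le_refl q, by linarith⟩ i
  have hDL : HasDerivWithinAt P a (Iic q) q := by
    apply (hfLd.hasDerivWithinAt (s := Iic q)).congr_of_eventuallyEq _ hPq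
    filter_upwards [hmemL] with t ht
    funext i; exact hLformula t ht i
  have hDR : HasDerivWithinAt P c (Ici q) q := by
    apply (hfRd.hasDerivWithinAt (s := Ici q)).congr_of_eventuallyEq _ hPqR
    filter_upwards [hmemR] with t ht
    funext i; exact hRformula t ht i
  have hud : UniqueDiffWithinAt ℝ (Iic q) q := uniqueDiffOn_Iic q q self_mem_Iic
  have hud' : UniqueDiffWithinAt ℝ (Ici q) q := uniqueDiffOn_Ici q q self_mem_Ici
  have h1 : a = deriv P q := by
    rw [← hDL.derivWithin hud,
      (hd.hasDerivAt.hasDerivWithinAt (s := Iic q)).derivWithin hud]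
  have h2 : c = deriv P q := by
    rw [← hDR.derivWithin hud',
      (hd.hasDerivAt.hasDerivWithinAt (s := Ici q)).derivWithin hud']
  have hac : a = c := h1.trans h2.symm
  have hbd : b = d := by
    funext i
    have e1 := hLformula q ⟨by linarith, le_refl q⟩ i
    have e2 := hRformula q ⟨le_refl q, by linarith⟩ i
    rw [e1] at e2
    rw [hac] at e2
    linarith
  refine ⟨δ, hδ, a, b, hδq, ?_⟩
  intro t ht i
  rcases le_total t q with h | h
  · exact hLformula t ⟨ht.1, h⟩ i
  · rw [hac, hbd]; exact hRformula t ⟨h, ht.2⟩ i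


lemma affine_eq_of_two_pts' {a b c d t₁ t₂ : ℝ} (h12 : t₁ ≠ t₂)
    (h1 : a * t₁ + b = c * t₁ + d) (h2 : a * t₂ + b = c * t₂ + d) :
    a = c ∧ b = d := by
  have hac : a = c := by
    have : (a - c) * (t₁ - t₂) = 0 := by ring_nf; linarith
    rcases mul_eq_zero.mp this with h | h
    · linarith
    · exact absurd (by linarith : t₁ = t₂) h12
  refine ⟨hac, ?_⟩
  rw [hac] at h1; linarith

/-- P is affine on an interval [u,v] ⊆ (q₀,∞) that is free of
non-differentiability points in its interior. -/
lemma affineOn {n : ℕ} {q₀ : ℝ} {P : ℝ → Fin n → ℝ}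
    (hcont : ContinuousOn P (Ici q₀))
    (hloc : ∀ q ∈ Ici q₀, ∃ ε > 0, ∃ a b c d : Fin n → ℝ,
      (∀ t ∈ Ici q₀ ∩ Icc (q - ε) q, ∀ i, P t i = a i * t + b i) ∧
      (∀ t ∈ Ici q₀ ∩ Icc q (q + ε), ∀ i, P t i = c i * t + d i))
    {u v : ℝ} (hu : q₀ < u) (huv : u < v)
    (hnd : ∀ t ∈ Ioo u v, DifferentiableAt ℝ P t) :
    ∃ a b : Fin n → ℝ, ∀ t ∈ Icc u v, ∀ i, P t i = a i * t + b i := by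
  obtain ⟨ε, hε, a0, b0, c, d, hL0, hR0⟩ := hloc u (le_of_lt hu)
  refine ⟨c, d, ?_⟩
  set S : Set ℝ := {s | s ∈ Icc u v ∧ ∀ t ∈ Icc u s, ∀ i, P t i = c i * t + d i} with hS
  have huS : u ∈ S := by
    refine ⟨⟨le_refl u, le_of_lt huv⟩, ?_⟩
    intro t ht i
    have : t = u := le_antisymm ht.2 ht.1
    subst this
    exact hR0 t ⟨mem_Ici.mpr (le_of_lt hu), le_refl t, by linarith⟩ i
  have hSne : S.Nonempty := ⟨u, huS⟩
  have hSbdd : BddAbove S := ⟨v, fun s hs => hs.1.2⟩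
  set m := sSup S with hm
  have hmu : u ≤ m := le_csSup hSbdd huS
  have hmv : m ≤ v := csSup_le hSne (fun s hs => hs.1.2)
  -- m ∈ S
  have hmS : m ∈ S := by
    refine ⟨⟨hmu, hmv⟩, ?_⟩
    intro t ht i
    rcases lt_or_eq_of_le ht.2 with hlt | heq
    · obtain ⟨s, hsS, hts⟩ := exists_lt_of_lt_csSup hSne hlt
      exact hsS.2 t ⟨ht.1, le_of_lt hts⟩ i
    · -- t = m; use continuity
      rcases eq_or_lt_of_le hmu with hum | hum
      · have htu : t = u := by rw [heq, ← hum]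
        subst htu
        exact huS.2 t ⟨le_refl t, le_refl t⟩ i
      rw [heq]
      have hne : (nhdsWithin m (Ico u m)).NeBot := by
        rw [← mem_closure_iff_nhdsWithin_neBot, closure_Ico (ne_of_lt hum)]
        exact ⟨le_of_lt hum, le_refl m⟩
      have hca : ContinuousAt P m :=
        hcont.continuousAt (Ici_mem_nhds (lt_of_lt_of_le hu hmu))
      have h1 : Tendsto (fun s => P s i) (nhdsWithin m (Ico u m)) (𝓝 (P m i)) :=
        (((continuous_apply i).tendsto (P m)).comp hca.tendsto).mono_left nhdsWithin_le_nhds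
      have h2 : Tendsto (fun s => c i * s + d i) (nhdsWithin m (Ico u m))
          (𝓝 (c i * m + d i)) :=
        (((continuous_const.mul continuous_id).add continuous_const).tendsto m).mono_left
          nhdsWithin_le_nhds
      have heqn : (fun s => P s i) =ᶠ[nhdsWithin m (Ico u m)] fun s => c i * s + d i := by
        filter_upwards [self_mem_nhdsWithin] with s hs
        obtain ⟨s', hs'S, hss'⟩ := exists_lt_of_lt_csSup hSne hs.2
        exact hs'S.2 s ⟨hs.1, le_of_lt hss'⟩ i
      exact tendsto_nhds_unique (h1.congr' heqn) h2
  -- Now show m = v by pushing past m if m < v.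
  rcases eq_or_lt_of_le hmv with hmveq | hmvlt
  · intro t ht
    exact hmS.2 t ⟨ht.1, hmveq ▸ ht.2⟩
  exfalso
  rcases eq_or_lt_of_le hmu with hum | hum
  · -- m = u: push using the right-formula at u with radius ε
    have hs' : min v (u + ε) ∈ S := by
      refine ⟨⟨le_min (le_of_lt huv) (by linarith), min_le_left _ _⟩, ?_⟩
      intro t ht i
      exact hR0 t ⟨mem_Ici.mpr (le_trans (le_of_lt hu) ht.1), ht.1,
        le_trans ht.2 (min_le_right _ _)⟩ i
    have := le_csSup hSbdd hs'
    rw [← hm] at this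
    have h1 : u < min v (u + ε) := lt_min (hum ▸ hmvlt) (by linarith)
    rw [← hum] at this
    linarith
  · -- u < m < v : use locAffine at m
    have hdm : DifferentiableAt ℝ P m := hnd m ⟨hum, hmvlt⟩
    obtain ⟨δ, hδ, a', b', hδq, hA⟩ := locAffine hloc (lt_of_lt_of_le hu hmu) hdm
    -- match coefficients on [max u (m-δ), m]
    set t₁ := max u (m - δ) with ht₁
    have ht₁m : t₁ < m := max_lt hum (by linarith)
    have hmatch : ∀ i, a' i = c i ∧ b' i = d i := by
      intro i
      have e1 : c i * t₁ + d i = a' i * t₁ + b' i := by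
        rw [← hmS.2 t₁ ⟨le_max_left _ _, le_of_lt ht₁m⟩ i,
          hA t₁ ⟨le_max_right _ _, by linarith⟩ i]
      have e2 : c i * m + d i = a' i * m + b' i := by
        rw [← hmS.2 m ⟨hmu, le_refl m⟩ i, hA m ⟨by linarith, by linarith⟩ i]
      have := affine_eq_of_two_pts' (ne_of_lt ht₁m) e1 e2
      exact ⟨this.1.symm, this.2.symm⟩
    have hs' : min v (m + δ) ∈ S := by
      refine ⟨⟨le_min (le_of_lt (lt_trans hum hmvlt)) (by linarith), min_le_left _ _⟩, ?_⟩
      intro t ht i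
      rcases le_total t m with h | h
      · exact hmS.2 t ⟨ht.1, h⟩ i
      · rw [← (hmatch i).1, ← (hmatch i).2]
        exact hA t ⟨by linarith, le_trans ht.2 (min_le_right _ _)⟩ i
    have hle := le_csSup hSbdd hs'
    rw [← hm] at hle
    have : m < min v (m + δ) := lt_min hmvlt (by linarith)
    linarith
section
variable {n : ℕ} {q₀ : ℝ} {P : ℝ → Fin n → ℝ} {w : ℕ → ℝ}

lemma wTendsto
    (hloc : ∀ q ∈ Ici q₀, ∃ ε > 0, ∃ a b c d : Fin n → ℝ,
      (∀ t ∈ Ici q₀ ∩ Icc (q - ε) q, ∀ i, P t i = a i * t + b i) ∧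
      (∀ t ∈ Ici q₀ ∩ Icc q (q + ε), ∀ i, P t i = c i * t + d i))
    (hw : StrictMono w)
    (hrange : Set.range w = {q ∈ Ioi q₀ | ¬DifferentiableAt ℝ P q}) :
    Tendsto w atTop atTop := by
  have hwq : ∀ i, q₀ < w i ∧ ¬DifferentiableAt ℝ P (w i) := by
    intro i
    have : w i ∈ Set.range w := mem_range_self i
    rw [hrange] at this
    exact ⟨this.1, this.2⟩
  by_contra h
  have hbdd : BddAbove (Set.range w) := by
    by_contra hb
    exact h (tendsto_atTop_atTop_of_monotone' hw.monotone hb)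
  set L := ⨆ i, w i with hL
  have htend : Tendsto w atTop (𝓝 L) := tendsto_atTop_ciSup hw.monotone hbdd
  have hwL : ∀ i, w i < L := fun i =>
    lt_of_lt_of_le (hw (Nat.lt_succ_self i)) (le_ciSup hbdd (i + 1))
  have hq₀L : q₀ < L := lt_of_lt_of_le (hwq 0).1 (le_ciSup hbdd 0)
  obtain ⟨ε, hε, a, b, c, d, hLf, hRf⟩ := hloc L (le_of_lt hq₀L)
  set α := max q₀ (L - ε) with hα
  have hαL : α < L := max_lt hq₀L (by linarith)
  have hev : ∀ᶠ i in atTop, α < w i := htend.eventually (eventually_gt_nhds hαL)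
  obtain ⟨i, hi⟩ := hev.exists
  have heq : P =ᶠ[𝓝 (w i)] fun t => fun j => a j * t + b j := by
    have hopen : Ioo α L ∈ 𝓝 (w i) := Ioo_mem_nhds hi (hwL i)
    filter_upwards [hopen] with t ht
    funext j
    exact hLf t ⟨mem_Ici.mpr (le_of_lt (lt_of_le_of_lt (le_max_left _ _) ht.1)),
      le_of_lt (lt_of_le_of_lt (le_max_right _ _) ht.1), le_of_lt ht.2⟩ j
  have : DifferentiableAt ℝ P (w i) := by
    rw [heq.differentiableAt_iff]
    rw [differentiableAt_pi]
    intro j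
    exact (differentiableAt_id.const_mul _).add_const _
  exact (hwq i).2 this

end


/-- `f` is, on `H`, convex and piecewise linear with slopes `0` then `1`. -/
def SlopeZeroOneOn (H : Set ℝ) (f : ℝ → ℝ) : Prop :=
  ∃ c v : ℝ, ∀ t ∈ H, f t = v + max (t - c) 0

/-- A generalized `n`-system on `I`: a continuous piecewise linear map
satisfying (G1), (G2) and (G3). -/
def IsGenNSystem (n : ℕ) (I : Set ℝ) (P : ℝ → Fin n → ℝ) : Prop :=
  ContinuousOn P I ∧
  (∀ q ∈ I, ∃ ε > 0, ∃ a b c d : Fin n → ℝ,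
    (∀ t ∈ I ∩ Icc (q - ε) q, ∀ i, P t i = a i * t + b i) ∧
    (∀ t ∈ I ∩ Icc q (q + ε), ∀ i, P t i = c i * t + d i)) ∧
  (∀ q ∈ I, (∀ i, 0 ≤ P q i) ∧ Monotone (P q) ∧ (∑ i, P q i) = q) ∧
  (∀ i : Fin n, MonotoneOn (fun q => P q i) I ∧ LipschitzOnWith 1 (fun q => P q i) I) ∧
  (∀ j : ℕ, ∀ hj : j + 1 < n, ∀ H : Set ℝ, H ⊆ I → H.OrdConnected →
    (∀ q ∈ H, P q ⟨j, Nat.lt_of_succ_lt hj⟩ < P q ⟨j + 1, hj⟩) →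
    SlopeZeroOneOn H fun q => ∑ i : Fin n, if (i : ℕ) ≤ j then P q i else 0)

/-- `P` is proper: its first coordinate (equivalently, by (S1)/(G1), each of its
coordinates) tends to infinity with `q`. -/
def IsProper (n : ℕ) (P : ℝ → Fin n → ℝ) : Prop :=
  ∀ i : Fin n, Tendsto (fun q => P q i) atTop atTop

/-- `F(P)`: the set of accumulation points of `q⁻¹ P(q)` as `q → ∞`. -/
def accPts (n : ℕ) (P : ℝ → Fin n → ℝ) : Set (Fin n → ℝ) :=
  {x | MapClusterPt x atTop fun q : ℝ => q⁻¹ • P q}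

/-- `K(P)`: the convex hull of `F(P)`. -/
def Kset (n : ℕ) (P : ℝ → Fin n → ℝ) : Set (Fin n → ℝ) :=
  convexHull ℝ (accPts n P)

theorem stmt_6 (n : ℕ) (hn : 2 ≤ n) (q₀ : ℝ) (hq₀ : 0 ≤ q₀)
    (P : ℝ → Fin n → ℝ) (hP : IsGenNSystem n (Ici q₀) P) (hprop : IsProper n P)
    (w : ℕ → ℝ) (hw : StrictMono w)
    (hrange : Set.range w = {q ∈ Ioi q₀ | ¬DifferentiableAt ℝ P q}) :
    Kset n P =
      convexHull ℝ {x | MapClusterPt x atTop fun i : ℕ => (w i)⁻¹ • P (w i)} := by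
  obtain ⟨hcont, hloc, hG1, hG2, hG3⟩ := hP
  have hwtop : Tendsto w atTop atTop := wTendsto hloc hw hrange
  have hwq : ∀ i, q₀ < w i := by
    intro i
    have : w i ∈ Set.range w := mem_range_self i
    rw [hrange] at this
    exact this.1
  have hdiff : ∀ t, q₀ < t → t ∉ Set.range w → DifferentiableAt ℝ P t := by
    intro t ht htw
    by_contra hc
    exact htw (hrange ▸ (⟨ht, hc⟩ : t ∈ {q ∈ Ioi q₀ | ¬DifferentiableAt ℝ P q}))
  set f : ℝ → Fin n → ℝ := fun q => q⁻¹ • P q with hf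
  set g : ℕ → Fin n → ℝ := fun i => (w i)⁻¹ • P (w i) with hg
  set E : Set (Fin n → ℝ) := {x | MapClusterPt x atTop g} with hE
  apply Set.Subset.antisymm
  · -- Kset ⊆ hull E
    apply convexHull_min _ (convex_convexHull ℝ _)
    intro x hx
    have hx' : MapClusterPt x atTop f := hx
    -- extract a sequence
    have hseq : ∀ k : ℕ, ∃ qk : ℝ, (k : ℝ) ≤ qk ∧ dist (f qk) x < 1 / (k + 1) := by
      intro k
      have h1 : Metric.ball x (1 / (k + 1)) ∈ 𝓝 x := Metric.ball_mem_nhds x (by positivity)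
      have h2 := (mapClusterPt_iff_frequently.mp hx') _ h1
      obtain ⟨qk, hq1, hq2⟩ := (frequently_atTop.mp h2) k
      exact ⟨qk, hq1, Metric.mem_ball.mp hq2⟩
    choose q hq1 hq2 using hseq
    have hqtop : Tendsto q atTop atTop :=
      tendsto_atTop_mono hq1 tendsto_natCast_atTop_atTop
    have hfq : Tendsto (fun k => f (q k)) atTop (𝓝 x) := by
      rw [tendsto_iff_dist_tendsto_zero]
      apply squeeze_zero (fun k => dist_nonneg) (fun k => le_of_lt (hq2 k))
      exact tendsto_one_div_add_atTop_nhds_zero_nat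
    obtain ⟨K, hK⟩ := exists_nat_ge (w 0)
    set Q : ℕ → ℝ := fun k => q (k + K) with hQ
    have hQ0 : ∀ k, w 0 ≤ Q k := by
      intro k
      refine le_trans hK (le_trans ?_ (hq1 (k + K)))
      exact_mod_cast Nat.le_add_left K k
    have hQk : ∀ k : ℕ, (k : ℝ) ≤ Q k := by
      intro k
      refine le_trans ?_ (hq1 (k + K))
      exact_mod_cast Nat.le_add_right k K
    have hfQ : Tendsto (fun k => f (Q k)) atTop (𝓝 x) := hfq.comp (tendsto_add_atTop_nat K)
    -- index of the interval containing Q k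
    have hIex : ∀ k, ∃ j, Q k < w j := fun k =>
      (hwtop.eventually (eventually_gt_atTop (Q k))).exists
    set J : ℕ → ℕ := fun k => Nat.find (hIex k) with hJ
    have hJpos : ∀ k, J k ≠ 0 := by
      intro k h
      have h2 : Q k < w (J k) := Nat.find_spec (hIex k)
      rw [h] at h2
      exact absurd h2 (not_lt.mpr (hQ0 k))
    set Ik : ℕ → ℕ := fun k => J k - 1 with hIkdef
    have hIk1 : ∀ k, Ik k + 1 = J k := fun k => Nat.succ_pred_eq_of_ne_zero (hJpos k)
    have hright : ∀ k, Q k < w (Ik k + 1) := by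
      intro k
      rw [hIk1 k]
      exact Nat.find_spec (hIex k)
    have hleft : ∀ k, w (Ik k) ≤ Q k := by
      intro k
      have hlt : Ik k < J k := by have := hIk1 k; omega
      have h := Nat.find_min (hIex k) hlt
      exact not_lt.mp h
    set u : ℕ → ℝ := fun k => w (Ik k) with hu
    set v : ℕ → ℝ := fun k => w (Ik k + 1) with hv
    have huq₀ : ∀ k, q₀ < u k := fun k => hwq (Ik k)
    have huv : ∀ k, u k < v k := fun k => hw (Nat.lt_succ_self (Ik k))
    have hupos : ∀ k, 0 < u k := fun k => lt_of_le_of_lt hq₀ (huq₀ k)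
    have hQpos : ∀ k, 0 < Q k := fun k => lt_of_lt_of_le (hupos k) (hleft k)
    have hvpos : ∀ k, 0 < v k := fun k => lt_trans (hupos k) (huv k)
    -- affine on each interval
    have haff : ∀ k, ∃ a b : Fin n → ℝ, ∀ t ∈ Icc (u k) (v k), ∀ i, P t i = a i * t + b i := by
      intro k
      apply affineOn hcont hloc (huq₀ k) (huv k)
      intro t ht
      apply hdiff t (lt_trans (huq₀ k) ht.1)
      rintro ⟨j, rfl⟩
      rcases le_or_gt j (Ik k) with h | h
      · exact absurd (hw.monotone h) (not_le.mpr ht.1)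
      · exact absurd (hw.monotone h) (not_le.mpr ht.2)
    choose A B hAB using haff
    set lam : ℕ → ℝ := fun k => u k * (v k - Q k) / (Q k * (v k - u k)) with hlam
    have hlam01 : ∀ k, lam k ∈ Icc (0 : ℝ) 1 := by
      intro k
      have h1 : 0 < Q k * (v k - u k) := mul_pos (hQpos k) (by linarith [huv k])
      constructor
      · apply div_nonneg _ (le_of_lt h1)
        have := hright k
        nlinarith [hupos k, hright k]
      · rw [div_le_one h1]
        nlinarith [hleft k, hvpos k, hupos k]
    have hid : ∀ k, f (Q k) = lam k • g (Ik k) + (1 - lam k) • g (Ik k + 1) := by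
      intro k
      funext i
      have hQne : Q k ≠ 0 := ne_of_gt (hQpos k)
      have hune : u k ≠ 0 := ne_of_gt (hupos k)
      have hvne : v k ≠ 0 := ne_of_gt (hvpos k)
      have hvune : v k - u k ≠ 0 := ne_of_gt (by linarith [huv k])
      simp only [hf, hg, hlam, Pi.add_apply, Pi.smul_apply, smul_eq_mul]
      rw [hAB k (Q k) ⟨hleft k, le_of_lt (hright k)⟩ i,
        hAB k (u k) ⟨le_refl _, le_of_lt (huv k)⟩ i,
        hAB k (v k) ⟨le_of_lt (huv k), le_refl _⟩ i]
      rw [show w (Ik k) = u k from rfl, show w (Ik k + 1) = v k from rfl]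
      field_simp
      ring
    -- compactness
    set D : Set (Fin n → ℝ) := univ.pi fun _ : Fin n => Icc (0 : ℝ) 1 with hD
    have hDcomp : IsCompact D := isCompact_univ_pi fun _ => isCompact_Icc
    have hgD : ∀ j, g j ∈ D := by
      intro j
      rw [hD, mem_univ_pi]
      intro i
      have hwj : 0 < w j := lt_of_le_of_lt hq₀ (hwq j)
      obtain ⟨hnn, _, hsum⟩ := hG1 (w j) (le_of_lt (hwq j))
      have hle : P (w j) i ≤ w j := by
        have h3 : P (w j) i ≤ ∑ i', P (w j) i' :=
          Finset.single_le_sum (f := fun i' => P (w j) i') (fun i' _ => hnn i') (Finset.mem_univ i)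
        rw [hsum] at h3
        exact h3
      have : g j i = (w j)⁻¹ * P (w j) i := by simp [hg]
      rw [this]
      constructor
      · exact mul_nonneg (inv_nonneg.mpr hwj.le) (hnn i)
      · calc (w j)⁻¹ * P (w j) i ≤ (w j)⁻¹ * w j :=
              mul_le_mul_of_nonneg_left hle (inv_nonneg.mpr hwj.le)
          _ = 1 := inv_mul_cancel₀ (ne_of_gt hwj)
    -- subsequences
    obtain ⟨lam₀, hlam₀, φ₁, hφ₁, hl1⟩ := isCompact_Icc.tendsto_subseq hlam01
    obtain ⟨y, hy, φ₂, hφ₂, hl2⟩ := hDcomp.tendsto_subseq (fun k => hgD (Ik (φ₁ k)))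
    obtain ⟨z, hz, φ₃, hφ₃, hl3⟩ := hDcomp.tendsto_subseq (fun k => hgD (Ik (φ₁ (φ₂ k)) + 1))
    set ψ : ℕ → ℕ := fun k => φ₁ (φ₂ (φ₃ k)) with hψdef
    have hψ : StrictMono ψ := hφ₁.comp (hφ₂.comp hφ₃)
    have hl1' : Tendsto (fun k => lam (ψ k)) atTop (𝓝 lam₀) :=
      hl1.comp (hφ₂.comp hφ₃).tendsto_atTop
    have hl2' : Tendsto (fun k => g (Ik (ψ k))) atTop (𝓝 y) := hl2.comp hφ₃.tendsto_atTop
    have hl3' : Tendsto (fun k => g (Ik (ψ k) + 1)) atTop (𝓝 z) := hl3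
    have hfQψ : Tendsto (fun k => f (Q (ψ k))) atTop (𝓝 x) := hfQ.comp hψ.tendsto_atTop
    have hcomb : Tendsto
        (fun k => lam (ψ k) • g (Ik (ψ k)) + (1 - lam (ψ k)) • g (Ik (ψ k) + 1))
        atTop (𝓝 (lam₀ • y + (1 - lam₀) • z)) :=
      (hl1'.smul hl2').add ((tendsto_const_nhds.sub hl1').smul hl3')
    have hxeq : x = lam₀ • y + (1 - lam₀) • z :=
      tendsto_nhds_unique (hfQψ.congr (fun k => hid (ψ k))) hcomb
    -- indices tend to infinity
    have hIktop : Tendsto Ik atTop atTop := by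
      rw [tendsto_atTop]
      intro M
      have key : ∀ k, w M ≤ Q k → M ≤ Ik k := by
        intro k hk
        by_contra hc
        push_neg at hc
        have : w (Ik k + 1) ≤ w M := hw.monotone (by omega)
        linarith [hright k]
      obtain ⟨M', hM'⟩ := exists_nat_ge (w M)
      filter_upwards [eventually_ge_atTop M'] with k hk
      exact key k (le_trans hM' (le_trans (Nat.cast_le.mpr hk) (hQk k)))
    have hIψtop : Tendsto (fun k => Ik (ψ k)) atTop atTop := hIktop.comp hψ.tendsto_atTop
    have hIψtop1 : Tendsto (fun k => Ik (ψ k) + 1) atTop atTop :=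
      tendsto_atTop_mono (fun k => Nat.le_succ _) hIψtop
    have hyE : y ∈ E := MapClusterPt.of_comp hIψtop hl2'.mapClusterPt
    have hzE : z ∈ E := MapClusterPt.of_comp hIψtop1 hl3'.mapClusterPt
    rw [hxeq]
    exact (convex_convexHull ℝ E) (subset_convexHull ℝ E hyE) (subset_convexHull ℝ E hzE)
      hlam₀.1 (sub_nonneg.mpr hlam₀.2) (by ring)
  · exact convexHull_mono (fun x hx => MapClusterPt.of_comp hwtop hx)
end
end

section
/- Let n ≥ 2, q₀ > 0 and let P: [q₀,∞) → ℝ^n be a proper generalized n-system. If there exists ρ > 1 such that P(ρq) = ρP(q) for each q ≥ q₀ (i.e. P is self-similar), then F(P) = {q^{−1}P(q) : q₀ ≤ q ≤ ρq₀}. -/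
open Set Filter

noncomputable section

theorem stmt_8 (n : ℕ) (hn : 2 ≤ n) (q₀ : ℝ) (hq₀ : 0 < q₀)
    (P : ℝ → Fin n → ℝ) (hP : IsGenNSystem n (Ici q₀) P) (hprop : IsProper n P)
    (ρ : ℝ) (hρ : 1 < ρ) (hss : ∀ q, q₀ ≤ q → P (ρ * q) = ρ • P q) :
    accPts n P = {x | ∃ q ∈ Icc q₀ (ρ * q₀), x = q⁻¹ • P q} := by

  have hρ0 : (0:ℝ) < ρ := lt_trans one_pos hρ
  set f : ℝ → Fin n → ℝ := fun q => q⁻¹ • P q with hf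
  -- periodicity
  have hper : ∀ q, q₀ ≤ q → f (ρ * q) = f q := by
    intro q hq
    have hq0 : q ≠ 0 := ne_of_gt (lt_of_lt_of_le hq₀ hq)
    simp only [hf, hss q hq, smul_smul]
    congr 1
    field_simp
  have hperk : ∀ k : ℕ, ∀ q, q₀ ≤ q → f (ρ ^ k * q) = f q := by
    intro k
    induction k with
    | zero => intro q hq; simp
    | succ k ih =>
      intro q hq
      have h1 : q₀ ≤ ρ ^ k * q := by
        have hpow : (1:ℝ) ≤ ρ ^ k := one_le_pow₀ hρ.le
        nlinarith
      calc f (ρ ^ (k+1) * q) = f (ρ * (ρ ^ k * q)) := by ring_nf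
      _ = f (ρ ^ k * q) := hper _ h1
      _ = f q := ih q hq
  -- reduction
  have hred : ∀ t, q₀ ≤ t → ∃ s ∈ Icc q₀ (ρ * q₀), f t = f s := by
    intro t ht
    obtain ⟨m, hm⟩ := pow_unbounded_of_one_lt (t / q₀) hρ
    have hex : ∃ k : ℕ, t < q₀ * ρ ^ (k + 1) := by
      refine ⟨m, ?_⟩
      have : t < q₀ * ρ ^ m := by
        rw [← div_lt_iff₀' hq₀] at *; exact hm
      calc t < q₀ * ρ ^ m := this
      _ ≤ q₀ * ρ ^ (m+1) := by
        apply mul_le_mul_of_nonneg_left (pow_le_pow_right₀ (le_of_lt hρ) (Nat.le_succ m)) (le_of_lt hq₀)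
    set k := Nat.find hex with hk
    have hklt : t < q₀ * ρ ^ (k + 1) := Nat.find_spec hex
    have hkge : q₀ * ρ ^ k ≤ t := by
      rcases Nat.eq_zero_or_pos k with h0 | hpos
      · rw [h0]; simpa using ht
      · have hlt : k - 1 < k := Nat.sub_lt hpos one_pos
        have := Nat.find_min hex hlt
        rw [Nat.sub_add_cancel hpos] at this
        push_neg at this
        exact this
    have hpk : (0:ℝ) < ρ ^ k := pow_pos hρ0 k
    refine ⟨t / ρ ^ k, ⟨?_, ?_⟩, ?_⟩
    · rw [le_div_iff₀ hpk]; linarith [hkge]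
    · rw [div_le_iff₀ hpk]
      have : q₀ * ρ ^ (k+1) = ρ * q₀ * ρ ^ k := by ring
      linarith
    · have : t = ρ ^ k * (t / ρ ^ k) := by field_simp
      conv_lhs => rw [this]
      apply hperk
      rw [le_div_iff₀ hpk]; linarith [hkge]
  -- compactness of image
  have hsub : Icc q₀ (ρ * q₀) ⊆ Ici q₀ := fun x hx => hx.1
  have hcont : ContinuousOn f (Icc q₀ (ρ * q₀)) := by
    refine ContinuousOn.smul (f := fun x : ℝ => x⁻¹) (g := P) ?_ ?_
    · apply ContinuousOn.inv₀ continuousOn_id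
      intro x hx; exact ne_of_gt (lt_of_lt_of_le hq₀ hx.1)
    · exact hP.1.mono hsub
  have hK : IsCompact (f '' Icc q₀ (ρ * q₀)) :=
    isCompact_Icc.image_of_continuousOn hcont
  have hev : ∀ᶠ t in (atTop : Filter ℝ), f t ∈ f '' Icc q₀ (ρ * q₀) := by
    filter_upwards [eventually_ge_atTop q₀] with t ht
    obtain ⟨s, hs, hfs⟩ := hred t ht
    exact ⟨s, hs, hfs.symm⟩
  ext x
  constructor
  · intro hx
    by_contra hnot
    have hclosed : IsClosed (f '' Icc q₀ (ρ * q₀)) := hK.isClosed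
    have hxK : x ∉ f '' Icc q₀ (ρ * q₀) := by
      intro ⟨q, hq, hfq⟩
      exact hnot ⟨q, hq, hfq.symm⟩
    have hmem : (f '' Icc q₀ (ρ * q₀))ᶜ ∈ nhds x := hclosed.isOpen_compl.mem_nhds hxK
    have hfreq := (mapClusterPt_iff_frequently.mp hx) _ hmem
    obtain ⟨t, htc, htm⟩ := (hfreq.and_eventually hev).exists
    exact htc htm
  · rintro ⟨q, hq, rfl⟩
    have hq' : q₀ ≤ q := hq.1
    apply MapClusterPt.of_comp (φ := fun k : ℕ => ρ ^ k * q)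
      (p := (atTop : Filter ℕ))
    · apply Tendsto.atTop_mul_const (lt_of_lt_of_le hq₀ hq')
      exact tendsto_pow_atTop_atTop_of_one_lt hρ
    · have : (f ∘ fun k : ℕ => ρ ^ k * q) = fun _ => f q := by
        funext k; exact hperk k q hq'
      rw [show ((fun q : ℝ => q⁻¹ • P q) ∘ fun k : ℕ => ρ ^ k * q) = (f ∘ fun k : ℕ => ρ ^ k * q) from rfl, this]
      exact tendsto_const_nhds.mapClusterPt
end
end

section
/- Fix real numbers 1 < α < β and let T = (T_1,…,T_5): ℝ^4 → ℝ^5 be as defined. Let Δ̄ = {(x_1,…,x_4) ∈ ℝ^4 : 0 ≤ x_1 ≤ ⋯ ≤ x_4, x_1+⋯+x_4 = 1}, E_3 = (0,0,1/2,1/2), A_1 = (1,1,1,α), A_2 = (1,1,α,α), A_3 = (1,1,α,α²), B_1 = (1,β,β,β), and for X with positive coordinate sum |X| write X̄ = X/|X|. Then the convex hull K of {B̄_1, Ā_1, Ā_2, Ā_3, E_3} satisfies K = {x ∈ Δ̄ : T_1(x) ≥ 0, T_2(x) ≥ 0 and T_3(x) ≥ 0}. -/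
open Set Filter

set_option maxHeartbeats 1000000

lemma mem_hull5 {E : Type*} [AddCommGroup E] [Module ℝ E] {v1 v2 v3 v4 v5 x : E}
    {w1 w2 w3 w4 w5 : ℝ}
    (h1 : 0 ≤ w1) (h2 : 0 ≤ w2) (h3 : 0 ≤ w3) (h4 : 0 ≤ w4) (h5 : 0 ≤ w5)
    (hs : w1 + w2 + w3 + w4 + w5 = 1)
    (hx : x = w1 • v1 + w2 • v2 + w3 • v3 + w4 • v4 + w5 • v5) :
    x ∈ convexHull ℝ ({v1, v2, v3, v4, v5} : Set E) := by
  have h := Finset.centerMass_mem_convexHull (Finset.univ : Finset (Fin 5))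
    (w := ![w1,w2,w3,w4,w5]) (z := ![v1,v2,v3,v4,v5]) (s := ({v1, v2, v3, v4, v5} : Set E))
    (fun i _ => by fin_cases i <;> simpa)
    (by simp [Fin.sum_univ_five]; linarith)
    (fun i _ => by fin_cases i <;> simp [Set.mem_insert_iff])
  rwa [Finset.centerMass_eq_of_sum_1 _ _ (by simp [Fin.sum_univ_five, hs]),
    show ∑ i, (![w1,w2,w3,w4,w5] i) • (![v1,v2,v3,v4,v5] i) = w1 • v1 + w2 • v2 + w3 • v3 + w4 • v4 + w5 • v5 by
      simp [Fin.sum_univ_five], ← hx] at h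

noncomputable section

def ptA1 (α : ℝ) : Fin 4 → ℝ := ![1, 1, 1, α]
def ptA2 (α : ℝ) : Fin 4 → ℝ := ![1, 1, α, α]
def ptA3 (α : ℝ) : Fin 4 → ℝ := ![1, 1, α, α ^ 2]
def ptB1 (β : ℝ) : Fin 4 → ℝ := ![1, β, β, β]
noncomputable def ptE3 : Fin 4 → ℝ := ![0, 0, 1/2, 1/2]

/-- `Ā₁ = A₁/|A₁|`, where `|X|` is the sum of the coordinates of `X`. -/
noncomputable def nA1 (α : ℝ) : Fin 4 → ℝ := (3 + α)⁻¹ • ptA1 α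
noncomputable def nA2 (α : ℝ) : Fin 4 → ℝ := (2 + 2 * α)⁻¹ • ptA2 α
noncomputable def nA3 (α : ℝ) : Fin 4 → ℝ := (2 + α + α ^ 2)⁻¹ • ptA3 α
noncomputable def nB1 (β : ℝ) : Fin 4 → ℝ := (1 + 3 * β)⁻¹ • ptB1 β

/-- The convex hull `K` of `{B̄₁, Ā₁, Ā₂, Ā₃, E₃}`. -/
noncomputable def Kbig (α β : ℝ) : Set (Fin 4 → ℝ) :=
  convexHull ℝ {nB1 β, nA1 α, nA2 α, nA3 α, ptE3}

/-- The linear map `T = (T₁,…,T₅) : ℝ⁴ → ℝ⁵` of Section 4. -/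
def Tfive (α β : ℝ) (x : Fin 4 → ℝ) : Fin 5 → ℝ :=
  ![-((α - 1) * β) * x 0 - (β - α) * x 1 + (β - 1) * x 3,
    (α - 1) * β * x 0 - (α - 1) * β * x 1 + α * (β - 1) * x 2 - (β - 1) * x 3,
    α * β * (α - 1) * x 0 - α * (α - 1) * x 1 + (β - 1) * x 2 - (β - 1) * x 3,
    x 2 - x 3,
    -x 1 + x 3]

/-- The simplex `Δ̄ = {x ∈ ℝ⁴ : 0 ≤ x₁ ≤ x₂ ≤ x₃ ≤ x₄, x₁+x₂+x₃+x₄ = 1}`. -/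
def stdDelta : Set (Fin 4 → ℝ) :=
  {x | 0 ≤ x 0 ∧ x 0 ≤ x 1 ∧ x 1 ≤ x 2 ∧ x 2 ≤ x 3 ∧ x 0 + x 1 + x 2 + x 3 = 1}

theorem stmt_11 (α β : ℝ) (hα : 1 < α) (hαβ : α < β) :
    Kbig α β =
      {x ∈ stdDelta | 0 ≤ Tfive α β x 0 ∧ 0 ≤ Tfive α β x 1 ∧ 0 ≤ Tfive α β x 2} := by
  have hα0 : (0:ℝ) < α := by linarith
  have hα1 : (0:ℝ) < α - 1 := by linarith
  have hβ1 : (0:ℝ) < β - 1 := by linarith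
  have hd1 : (0:ℝ) < 3 + α := by linarith
  have hd2 : (0:ℝ) < 2 + 2*α := by linarith
  have hd3 : (0:ℝ) < 2 + α + α^2 := by nlinarith
  have hdB : (0:ℝ) < 1 + 3*β := by linarith
  apply Set.Subset.antisymm
  · -- hull ⊆ polytope
    apply convexHull_min
    · intro p hp
      simp only [Set.mem_insert_iff, Set.mem_singleton_iff] at hp
      rcases hp with rfl | rfl | rfl | rfl | rfl
      · -- nB1
        simp only [Set.mem_setOf_eq, stdDelta, Tfive, nB1, ptB1, Pi.smul_apply, smul_eq_mul,
          Matrix.cons_val_zero, Matrix.cons_val_one, Matrix.head_cons,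
          Matrix.cons_val_two, Matrix.tail_cons, Matrix.cons_val_three]
        have hi : (0:ℝ) ≤ (1 + 3*β)⁻¹ := by positivity
        refine ⟨⟨by positivity, ?_, ?_, ?_, ?_⟩, ?_, ?_, ?_⟩
        · nlinarith
        · nlinarith
        · nlinarith
        · field_simp; ring
        · nlinarith
        · nlinarith
        · nlinarith
      · -- nA1
        simp only [Set.mem_setOf_eq, stdDelta, Tfive, nA1, ptA1, Pi.smul_apply, smul_eq_mul,
          Matrix.cons_val_zero, Matrix.cons_val_one, Matrix.head_cons,
          Matrix.cons_val_two, Matrix.tail_cons, Matrix.cons_val_three]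
        have hi : (0:ℝ) ≤ (3 + α)⁻¹ := by positivity
        refine ⟨⟨by positivity, ?_, ?_, ?_, ?_⟩, ?_, ?_, ?_⟩
        · nlinarith
        · nlinarith
        · nlinarith
        · field_simp; ring
        · nlinarith
        · nlinarith
        · nlinarith [mul_nonneg (mul_nonneg (mul_nonneg (sq_nonneg (α-1)) hβ1.le) hi) hi,
            mul_nonneg (mul_nonneg (sq_nonneg (α-1)) hβ1.le) hi]
      · -- nA2
        simp only [Set.mem_setOf_eq, stdDelta, Tfive, nA2, ptA2, Pi.smul_apply, smul_eq_mul,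
          Matrix.cons_val_zero, Matrix.cons_val_one, Matrix.head_cons,
          Matrix.cons_val_two, Matrix.tail_cons, Matrix.cons_val_three]
        have hi : (0:ℝ) ≤ (2 + 2*α)⁻¹ := by positivity
        refine ⟨⟨by positivity, ?_, ?_, ?_, ?_⟩, ?_, ?_, ?_⟩
        · nlinarith
        · nlinarith
        · nlinarith
        · field_simp; ring
        · nlinarith
        · nlinarith [mul_nonneg (mul_nonneg (mul_nonneg (mul_nonneg hα0.le hα1.le) hβ1.le) hi) hi,
            mul_nonneg (mul_nonneg (mul_nonneg hα0.le hα1.le) hβ1.le) hi]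
        · nlinarith [mul_nonneg (mul_nonneg (mul_nonneg (mul_nonneg hα0.le hα1.le) hβ1.le) hi) hi,
            mul_nonneg (mul_nonneg (mul_nonneg hα0.le hα1.le) hβ1.le) hi]
      · -- nA3
        simp only [Set.mem_setOf_eq, stdDelta, Tfive, nA3, ptA3, Pi.smul_apply, smul_eq_mul,
          Matrix.cons_val_zero, Matrix.cons_val_one, Matrix.head_cons,
          Matrix.cons_val_two, Matrix.tail_cons, Matrix.cons_val_three]
        have hi : (0:ℝ) ≤ (2 + α + α^2)⁻¹ := by positivity
        refine ⟨⟨by positivity, ?_, ?_, ?_, ?_⟩, ?_, ?_, ?_⟩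
        · nlinarith
        · nlinarith
        · nlinarith [mul_nonneg (mul_nonneg hα0.le hα1.le) hi]
        · field_simp; ring
        · nlinarith [mul_nonneg (mul_nonneg (mul_nonneg hα0.le hα1.le) hβ1.le) hi]
        · nlinarith
        · nlinarith
      · -- ptE3
        simp only [Set.mem_setOf_eq, stdDelta, Tfive, ptE3,
          Matrix.cons_val_zero, Matrix.cons_val_one, Matrix.head_cons,
          Matrix.cons_val_two, Matrix.tail_cons, Matrix.cons_val_three]
        refine ⟨⟨by norm_num, by norm_num, by norm_num, by norm_num, by norm_num⟩,
          by nlinarith, by nlinarith, by nlinarith⟩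
    · -- convexity
      intro x hx y hy a b ha hb hab
      obtain ⟨⟨hx0, hx01, hx12, hx23, hxs⟩, hxT1, hxT2, hxT3⟩ := hx
      obtain ⟨⟨hy0, hy01, hy12, hy23, hys⟩, hyT1, hyT2, hyT3⟩ := hy
      simp only [Tfive, Matrix.cons_val_zero, Matrix.cons_val_one, Matrix.head_cons,
        Matrix.cons_val_two, Matrix.tail_cons] at hxT1 hxT2 hxT3 hyT1 hyT2 hyT3
      refine ⟨⟨?_, ?_, ?_, ?_, ?_⟩, ?_, ?_, ?_⟩ <;>
        simp only [Tfive, Pi.add_apply, Pi.smul_apply, smul_eq_mul,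
          Matrix.cons_val_zero, Matrix.cons_val_one, Matrix.head_cons,
          Matrix.cons_val_two, Matrix.tail_cons]
      · exact add_nonneg (mul_nonneg ha hx0) (mul_nonneg hb hy0)
      · nlinarith [mul_le_mul_of_nonneg_left hx01 ha, mul_le_mul_of_nonneg_left hy01 hb]
      · nlinarith [mul_le_mul_of_nonneg_left hx12 ha, mul_le_mul_of_nonneg_left hy12 hb]
      · nlinarith [mul_le_mul_of_nonneg_left hx23 ha, mul_le_mul_of_nonneg_left hy23 hb]
      · nlinarith [hxs, hys]
      · nlinarith [mul_nonneg ha hxT1, mul_nonneg hb hyT1]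
      · nlinarith [mul_nonneg ha hxT2, mul_nonneg hb hyT2]
      · nlinarith [mul_nonneg ha hxT3, mul_nonneg hb hyT3]
  · -- polytope ⊆ hull
    intro x hx
    obtain ⟨⟨h0, h01, h12, h23, hsum⟩, hT1, hT2, hT3⟩ := hx
    simp only [Tfive, Matrix.cons_val_zero, Matrix.cons_val_one, Matrix.head_cons,
      Matrix.cons_val_two, Matrix.tail_cons] at hT1 hT2 hT3
    have hne1 : β - 1 ≠ 0 := ne_of_gt hβ1
    have hne2 : α - 1 ≠ 0 := ne_of_gt hα1
    have hne3 : α ≠ 0 := ne_of_gt hα0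
    have hne4 : (1:ℝ)+3*β ≠ 0 := ne_of_gt hdB
    have hne5 : (3:ℝ)+α ≠ 0 := ne_of_gt hd1
    have hne6 : (2:ℝ)+2*α ≠ 0 := ne_of_gt hd2
    have hne7 : (2:ℝ)+α+α^2 ≠ 0 := ne_of_gt hd3
    set x0 := x 0; set x1 := x 1; set x2 := x 2; set x3 := x 3
    have hvec : ∀ cB c1 c2 c3 cE : ℝ,
        x0 = cB + c1 + c2 + c3 →
        x1 = cB*β + c1 + c2 + c3 →
        x2 = cB*β + c1 + c2*α + c3*α + cE/2 →
        x3 = cB*β + c1*α + c2*α + c3*α^2 + cE/2 →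
        x = (cB*(1+3*β)) • nB1 β + (c1*(3+α)) • nA1 α + (c2*(2+2*α)) • nA2 α +
          (c3*(2+α+α^2)) • nA3 α + cE • ptE3 := by
      intro cB c1 c2 c3 cE e0 e1 e2 e3
      have i4 : (1+3*β)*(1+3*β)⁻¹ = 1 := mul_inv_cancel₀ hne4
      have i5 : (3+α)*(3+α)⁻¹ = 1 := mul_inv_cancel₀ hne5
      have i6 : (2+2*α)*(2+2*α)⁻¹ = 1 := mul_inv_cancel₀ hne6
      have i7 : (2+α+α^2)*(2+α+α^2)⁻¹ = 1 := mul_inv_cancel₀ hne7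
      funext i
      fin_cases i <;>
        simp only [show (⟨0, by omega⟩ : Fin 4) = 0 from rfl,
          show (⟨1, by omega⟩ : Fin 4) = 1 from rfl,
          show (⟨2, by omega⟩ : Fin 4) = 2 from rfl,
          show (⟨3, by omega⟩ : Fin 4) = 3 from rfl,
          nB1, nA1, nA2, nA3, ptB1, ptA1, ptA2, ptA3, ptE3,
          Pi.add_apply, Pi.smul_apply, smul_eq_mul,
          Matrix.cons_val_zero, Matrix.cons_val_one, Matrix.head_cons,
          Matrix.cons_val_two, Matrix.tail_cons, Matrix.cons_val_three]
      · rw [show x 0 = x0 from rfl]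
        linear_combination e0 - cB*i4 - c1*i5 - c2*i6 - c3*i7
      · rw [show x 1 = x1 from rfl]
        linear_combination e1 - cB*β*i4 - c1*i5 - c2*i6 - c3*i7
      · rw [show x 2 = x2 from rfl]
        linear_combination e2 - cB*β*i4 - c1*i5 - c2*α*i6 - c3*α*i7
      · rw [show x 3 = x3 from rfl]
        linear_combination e3 - cB*β*i4 - c1*α*i5 - c2*α*i6 - c3*α^2*i7
    have hD : α*(α-1)*(β-1) ≠ 0 := by positivity
    have hD0 : (0:ℝ) < α*(α-1)*(β-1) := by positivity
    rcases le_or_gt 0 ((β-1)*x2 - β*(α-1)*x0 - (β-α)*x1) with hLpos | hLneg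
    · -- Case L ≥ 0 : use B1, A2, A3, E3
      have heq := hvec (α*(α-1)*(x1-x0)/(α*(α-1)*(β-1))) 0
        ((α*β*(α-1)*x0 - α*(α-1)*x1 + (β-1)*x2 - (β-1)*x3)/(α*(α-1)*(β-1)))
        ((β-1)*(x3-x2)/(α*(α-1)*(β-1)))
        (2*α*(α-1)*((β-1)*x2 - β*(α-1)*x0 - (β-α)*x1)/(α*(α-1)*(β-1)))
        (by field_simp; ring) (by field_simp; ring) (by field_simp; ring) (by field_simp; ring)
      refine mem_hull5 ?_ ?_ ?_ ?_ ?_ ?_ heq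
      · exact mul_nonneg (div_nonneg (by nlinarith) hD0.le) hdB.le
      · simp
      · exact mul_nonneg (div_nonneg (by nlinarith) hD0.le) hd2.le
      · exact mul_nonneg (div_nonneg (by nlinarith) hD0.le) hd3.le
      · exact div_nonneg (by nlinarith) hD0.le
      · have : α*(α-1)*(x1-x0)/(α*(α-1)*(β-1))*(1+3*β) + 0*(3+α) +
            (α*β*(α-1)*x0 - α*(α-1)*x1 + (β-1)*x2 - (β-1)*x3)/(α*(α-1)*(β-1))*(2+2*α) +
            (β-1)*(x3-x2)/(α*(α-1)*(β-1))*(2+α+α^2) +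
            2*α*(α-1)*((β-1)*x2 - β*(α-1)*x0 - (β-α)*x1)/(α*(α-1)*(β-1)) =
            x0 + x1 + x2 + x3 := by
          field_simp
          ring
        exact this.trans hsum
    · -- Case L < 0 : use B1, A1, A2, A3
      have heq := hvec (α*(α-1)*(x1-x0)/(α*(α-1)*(β-1)))
        ((α*(β*(α-1)*x0 + (β-α)*x1 - (β-1)*x2))/(α*(α-1)*(β-1)))
        (((α-1)*β*x0 - (α-1)*β*x1 + α*(β-1)*x2 - (β-1)*x3)/(α*(α-1)*(β-1)))
        (((β-1)*x3 - (α-1)*β*x0 - (β-α)*x1)/(α*(α-1)*(β-1))) 0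
        (by field_simp; ring) (by field_simp; ring) (by field_simp; ring) (by field_simp; ring)
      refine mem_hull5 ?_ ?_ ?_ ?_ ?_ ?_ heq
      · exact mul_nonneg (div_nonneg (by nlinarith) hD0.le) hdB.le
      · exact mul_nonneg (div_nonneg (by nlinarith) hD0.le) hd1.le
      · exact mul_nonneg (div_nonneg (by nlinarith) hD0.le) hd2.le
      · exact mul_nonneg (div_nonneg (by nlinarith) hD0.le) hd3.le
      · exact le_refl 0
      · have : α*(α-1)*(x1-x0)/(α*(α-1)*(β-1))*(1+3*β) +
            (α*(β*(α-1)*x0 + (β-α)*x1 - (β-1)*x2))/(α*(α-1)*(β-1))*(3+α) +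
            ((α-1)*β*x0 - (α-1)*β*x1 + α*(β-1)*x2 - (β-1)*x3)/(α*(α-1)*(β-1))*(2+2*α) +
            ((β-1)*x3 - (α-1)*β*x0 - (β-α)*x1)/(α*(α-1)*(β-1))*(2+α+α^2) + 0 =
            x0 + x1 + x2 + x3 := by
          field_simp
          ring
        exact this.trans hsum
end
end

section
/- Fix real numbers 1 < α < β, let T = (T_1,…,T_5): ℝ^4 → ℝ^5 be as defined, and let R and S be the self-similar proper generalized 4-systems on [3+α,∞) and [1+3β,∞) with division-point data A_1, A_2, A_3, αA_1 and B_1, B_2, B_3, βB_1 respectively. Then μ_T(R) = (0, 0, 0, α(1−α)/(2+α+α²), (α−1)/(2+2α)) and μ_T(S) = (0, 0, 0, 0, 0); consequently min{μ_T(R), μ_T(S)} (coordinate-wise minimum) equals (0, 0, 0, α(1−α)/(2+α+α²), 0). -/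
open Set Filter

noncomputable section

/-- `μ_T(P) = (liminf q⁻¹ T₁(P(q)), …, liminf q⁻¹ Tₘ(P(q)))`. -/
def muVec {n m : ℕ} (T : (Fin n → ℝ) → Fin m → ℝ) (P : ℝ → Fin n → ℝ) : Fin m → ℝ :=
  fun i => liminf (fun q : ℝ => T (P q) i / q) atTop

def ptB2 (β : ℝ) : Fin 4 → ℝ := ![1, β, β ^ 2, β ^ 2]
def ptB3 (β : ℝ) : Fin 4 → ℝ := ![β, β, β ^ 2, β ^ 2]

/-- The self-similar proper generalized `4`-system `R` on `[3+α, ∞)`: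
on `[3+α, α(3+α)]` it is the generalized `4`-system with `R₁ = R₂` and
division points `A₁, A₂, A₃, αA₁`, and it satisfies `R(αq) = αR(q)`. -/
def RFull (α : ℝ) (R : ℝ → Fin 4 → ℝ) : Prop :=
  IsGenNSystem 4 (Ici (3 + α)) R ∧
  (∀ q ∈ Icc (3 + α) (α * (3 + α)), R q 0 = R q 1) ∧
  {q ∈ Ioo (3 + α) (α * (3 + α)) | ¬DifferentiableAt ℝ R q} =
    {2 + 2 * α, 2 + α + α ^ 2} ∧
  R (3 + α) = ptA1 α ∧ R (2 + 2 * α) = ptA2 α ∧ R (2 + α + α ^ 2) = ptA3 α ∧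
  (∀ q, 3 + α ≤ q → R (α * q) = α • R q)

/-- The self-similar proper generalized `4`-system `S` on `[1+3β, ∞)`:
on `[1+3β, β(1+3β)]` it is the generalized `4`-system with `S₃ = S₄` and
division points `B₁, B₂, B₃, βB₁`, and it satisfies `S(βq) = βS(q)`. -/
def SFull (β : ℝ) (S : ℝ → Fin 4 → ℝ) : Prop :=
  IsGenNSystem 4 (Ici (1 + 3 * β)) S ∧
  (∀ q ∈ Icc (1 + 3 * β) (β * (1 + 3 * β)), S q 2 = S q 3) ∧
  {q ∈ Ioo (1 + 3 * β) (β * (1 + 3 * β)) | ¬DifferentiableAt ℝ S q} =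
    {1 + β + 2 * β ^ 2, 2 * β + 2 * β ^ 2} ∧
  S (1 + 3 * β) = ptB1 β ∧ S (1 + β + 2 * β ^ 2) = ptB2 β ∧
  S (2 * β + 2 * β ^ 2) = ptB3 β ∧
  (∀ q, 1 + 3 * β ≤ q → S (β * q) = β • S q)



section AuxLemmas

lemma monoConst {f : ℝ → ℝ} {I : Set ℝ} (hf : MonotoneOn f I) {a b q : ℝ}
    (ha : a ∈ I) (hb : b ∈ I) (hq : q ∈ I) (h1 : a ≤ q) (h2 : q ≤ b) (heq : f a = f b) :
    f q = f a :=
  le_antisymm (heq ▸ hf hq hb h2) (hf ha hq h1)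

set_option maxHeartbeats 800000 in
lemma liminf_self_similar (α a : ℝ) (hα : 1 < α) (ha : 0 < a)
    (P : ℝ → Fin 4 → ℝ) (hscale : ∀ q, a ≤ q → P (α * q) = α • P q)
    (T : (Fin 4 → ℝ) → ℝ) (hT : ∀ (c : ℝ) (x : Fin 4 → ℝ), T (c • x) = c * T x)
    (m : ℝ) (hlb : ∀ q ∈ Icc a (α * a), m * q ≤ T (P q))
    (qs : ℝ) (hqs : qs ∈ Icc a (α * a)) (heq : T (P qs) = m * qs) :
    liminf (fun q => T (P q) / q) atTop = m := by
  classical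
  have hα0 : (0:ℝ) < α := by linarith
  have hpow : ∀ k : ℕ, ∀ q, a ≤ q → P (α ^ k * q) = (α ^ k) • P q := by
    intro k
    induction k with
    | zero => intro q hq; simp
    | succ n ih =>
      intro q hq
      have h1 : a ≤ α ^ n * q := by
        have h2 : (1:ℝ) ≤ α ^ n := one_le_pow₀ hα.le
        nlinarith
      have : α ^ (n + 1) * q = α * (α ^ n * q) := by ring
      rw [this, hscale _ h1, ih q hq, smul_smul]
      congr 1
      ring
  have hqs0 : 0 < qs := lt_of_lt_of_le ha hqs.1
  have hlow : ∀ q, a ≤ q → m * q ≤ T (P q) := by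
    intro q hq
    have hq0 : 0 < q := lt_of_lt_of_le ha hq
    have hex : ∃ n : ℕ, q < a * α ^ (n + 1) := by
      obtain ⟨n, hn⟩ := pow_unbounded_of_one_lt (q / a) hα
      refine ⟨n, ?_⟩
      have := (div_lt_iff₀ ha).mp hn
      calc q < α ^ n * a := this
        _ ≤ a * α ^ (n+1) := by
          have hp : (0:ℝ) < α ^ n := pow_pos hα0 n
          rw [pow_succ]
          nlinarith [mul_nonneg (mul_pos ha hp).le (by linarith : (0:ℝ) ≤ α - 1)]
    set n0 := Nat.find hex with hn0
    have h1 : q < a * α ^ (n0 + 1) := Nat.find_spec hex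
    have h2 : a * α ^ n0 ≤ q := by
      match hh : n0 with
      | 0 => simpa using hq
      | k + 1 =>
        have := Nat.find_min hex (by omega : k < n0)
        push_neg at this
        simpa using this
    have hp : (0:ℝ) < α ^ n0 := pow_pos hα0 n0
    set q0 := q / α ^ n0 with hq0def
    have hqeq : q = α ^ n0 * q0 := by rw [hq0def, mul_div_left_comm, div_self hp.ne', mul_one]
    have hq0mem : q0 ∈ Icc a (α * a) := by
      constructor
      · rw [le_div_iff₀ hp]; linarith [h2]
      · rw [div_le_iff₀ hp]
        have : a * α ^ (n0 + 1) = α * a * α ^ n0 := by ring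
        linarith [h1.le, this ▸ h1.le]
    calc m * q = α ^ n0 * (m * q0) := by rw [hqeq]; ring
      _ ≤ α ^ n0 * T (P q0) := by
        have := hlb q0 hq0mem
        exact mul_le_mul_of_nonneg_left this hp.le
      _ = T (P q) := by rw [hqeq, hpow n0 q0 hq0mem.1, hT]
  have hev : ∀ᶠ q in atTop, m ≤ T (P q) / q := by
    filter_upwards [eventually_ge_atTop a] with q hq
    have hq0 : 0 < q := lt_of_lt_of_le ha hq
    rw [le_div_iff₀ hq0]
    exact hlow q hq
  have hfreq : ∃ᶠ q in atTop, T (P q) / q ≤ m := by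
    rw [frequently_atTop]
    intro b
    obtain ⟨n, hn⟩ := pow_unbounded_of_one_lt (b / qs) hα
    have hp : (0:ℝ) < α ^ n := pow_pos hα0 n
    have hb : b ≤ α ^ n * qs := by
      have := (div_lt_iff₀ hqs0).mp hn
      linarith
    refine ⟨α ^ n * qs, hb, ?_⟩
    rw [hpow n qs hqs.1, hT, heq]
    have h0 : (0:ℝ) < α ^ n * qs := by positivity
    rw [div_le_iff₀ h0]
    ring_nf
    exact le_refl _
  refine le_antisymm (liminf_le_of_frequently_le hfreq ?_) (le_liminf_of_le ?_ hev)
  · exact isBoundedUnder_of_eventually_ge hev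
  · exact IsCoboundedUnder.of_frequently_le hfreq

end AuxLemmas


lemma Tfive0 (α β : ℝ) (x : Fin 4 → ℝ) :
    Tfive α β x 0 = -((α - 1) * β) * x 0 - (β - α) * x 1 + (β - 1) * x 3 := rfl
lemma Tfive1 (α β : ℝ) (x : Fin 4 → ℝ) :
    Tfive α β x 1 = (α - 1) * β * x 0 - (α - 1) * β * x 1 + α * (β - 1) * x 2 - (β - 1) * x 3 := rfl
lemma Tfive2 (α β : ℝ) (x : Fin 4 → ℝ) :
    Tfive α β x 2 = α * β * (α - 1) * x 0 - α * (α - 1) * x 1 + (β - 1) * x 2 - (β - 1) * x 3 := rfl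
lemma Tfive3 (α β : ℝ) (x : Fin 4 → ℝ) : Tfive α β x 3 = x 2 - x 3 := rfl
lemma Tfive4 (α β : ℝ) (x : Fin 4 → ℝ) : Tfive α β x 4 = -x 1 + x 3 := rfl

set_option maxHeartbeats 800000 in
lemma Tfive_smul (α β : ℝ) (i : Fin 5) (c : ℝ) (x : Fin 4 → ℝ) :
    Tfive α β (c • x) i = c * Tfive α β x i := by
  fin_cases i <;> simp [Tfive, Pi.smul_apply, smul_eq_mul] <;> ring

set_option maxHeartbeats 1000000 in
lemma pieceR_lemma (α : ℝ) (hα : 1 < α) (R : ℝ → Fin 4 → ℝ) (hR : RFull α R) :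
    ∀ q ∈ Icc (3 + α) (α * (3 + α)),
      ((3 + α ≤ q ∧ q ≤ 2 + 2 * α) ∧ R q 0 = 1 ∧ R q 1 = 1 ∧ R q 2 = q - 2 - α ∧ R q 3 = α) ∨
      ((2 + 2 * α ≤ q ∧ q ≤ 2 + α + α ^ 2) ∧ R q 0 = 1 ∧ R q 1 = 1 ∧ R q 2 = α ∧ R q 3 = q - 2 - α) ∨
      ((2 + α + α ^ 2 ≤ q ∧ q ≤ α * (3 + α)) ∧ R q 0 = (q - α - α ^ 2) / 2 ∧
        R q 1 = (q - α - α ^ 2) / 2 ∧ R q 2 = α ∧ R q 3 = α ^ 2) := by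
  obtain ⟨⟨-, -, hg1R, hg2R, -⟩, h01R, -, hA1, hA2, hA3, hscR⟩ := hR
  have oR1 : (3:ℝ) + α ≤ 2 + 2 * α := by linarith
  have oR2 : (2:ℝ) + 2 * α ≤ 2 + α + α ^ 2 := by nlinarith
  have oR3 : (2:ℝ) + α + α ^ 2 ≤ α * (3 + α) := by nlinarith
  have monR : ∀ i, MonotoneOn (fun q => R q i) (Ici (3 + α)) := fun i => (hg2R i).1
  have sumR : ∀ q, 3 + α ≤ q → R q 0 + R q 1 + R q 2 + R q 3 = q := by
    intro q hq
    have := (hg1R q (Set.mem_Ici.mpr hq)).2.2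
    rwa [Fin.sum_univ_four] at this
  have hA1top : R (α * (3 + α)) = α • ptA1 α := by rw [hscR (3 + α) le_rfl, hA1]
  have mR0 : (3 + α : ℝ) ∈ Ici (3 + α) := Set.mem_Ici.mpr le_rfl
  have mR1 : (2 + 2 * α : ℝ) ∈ Ici (3 + α) := Set.mem_Ici.mpr oR1
  have mR2 : (2 + α + α ^ 2 : ℝ) ∈ Ici (3 + α) := Set.mem_Ici.mpr (le_trans oR1 oR2)
  have mR3 : (α * (3 + α) : ℝ) ∈ Ici (3 + α) := Set.mem_Ici.mpr (le_trans (le_trans oR1 oR2) oR3)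
  have a10 : R (3 + α) 0 = 1 := congrFun hA1 0
  have a11 : R (3 + α) 1 = 1 := congrFun hA1 1
  have a13 : R (3 + α) 3 = α := congrFun hA1 3
  have a20 : R (2 + 2 * α) 0 = 1 := congrFun hA2 0
  have a21 : R (2 + 2 * α) 1 = 1 := congrFun hA2 1
  have a22 : R (2 + 2 * α) 2 = α := congrFun hA2 2
  have a23 : R (2 + 2 * α) 3 = α := congrFun hA2 3
  have a30 : R (2 + α + α ^ 2) 0 = 1 := congrFun hA3 0
  have a31 : R (2 + α + α ^ 2) 1 = 1 := congrFun hA3 1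
  have a32 : R (2 + α + α ^ 2) 2 = α := congrFun hA3 2
  have a33 : R (2 + α + α ^ 2) 3 = α ^ 2 := congrFun hA3 3
  have a42 : R (α * (3 + α)) 2 = α := by rw [hA1top]; show α * 1 = α; ring
  have a43 : R (α * (3 + α)) 3 = α ^ 2 := by rw [hA1top]; show α * α = α ^ 2; ring
  intro q hq
  have hmq : q ∈ Ici (3 + α) := Set.mem_Ici.mpr hq.1
  by_cases hc1 : q ≤ 2 + 2 * α
  · left
    have e0 : R q 0 = 1 := by
      have h : R q 0 = R (3 + α) 0 :=
        monoConst (monR 0) mR0 mR1 hmq hq.1 hc1 (a10.trans a20.symm)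
      rw [h, a10]
    have e1 : R q 1 = 1 := by
      have h : R q 1 = R (3 + α) 1 :=
        monoConst (monR 1) mR0 mR1 hmq hq.1 hc1 (a11.trans a21.symm)
      rw [h, a11]
    have e3 : R q 3 = α := by
      have h : R q 3 = R (3 + α) 3 :=
        monoConst (monR 3) mR0 mR1 hmq hq.1 hc1 (a13.trans a23.symm)
      rw [h, a13]
    have e2 : R q 2 = q - 2 - α := by
      have hs := sumR q hq.1
      linarith
    exact ⟨⟨hq.1, hc1⟩, e0, e1, e2, e3⟩
  · push_neg at hc1
    by_cases hc2 : q ≤ 2 + α + α ^ 2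
    · right; left
      have e0 : R q 0 = 1 := by
        have h : R q 0 = R (2 + 2 * α) 0 :=
          monoConst (monR 0) mR1 mR2 hmq hc1.le hc2 (a20.trans a30.symm)
        rw [h, a20]
      have e1 : R q 1 = 1 := by
        have h : R q 1 = R (2 + 2 * α) 1 :=
          monoConst (monR 1) mR1 mR2 hmq hc1.le hc2 (a21.trans a31.symm)
        rw [h, a21]
      have e2 : R q 2 = α := by
        have h : R q 2 = R (2 + 2 * α) 2 :=
          monoConst (monR 2) mR1 mR2 hmq hc1.le hc2 (a22.trans a32.symm)
        rw [h, a22]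
      have e3 : R q 3 = q - 2 - α := by
        have hs := sumR q hq.1
        linarith
      exact ⟨⟨hc1.le, hc2⟩, e0, e1, e2, e3⟩
    · push_neg at hc2
      right; right
      have e2 : R q 2 = α := by
        have h : R q 2 = R (2 + α + α ^ 2) 2 :=
          monoConst (monR 2) mR2 mR3 hmq hc2.le hq.2 (a32.trans a42.symm)
        rw [h, a32]
      have e3 : R q 3 = α ^ 2 := by
        have h : R q 3 = R (2 + α + α ^ 2) 3 :=
          monoConst (monR 3) mR2 mR3 hmq hc2.le hq.2 (a33.trans a43.symm)
        rw [h, a33]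
      have e01 : R q 0 = R q 1 := h01R q hq
      have hs := sumR q hq.1
      have e0 : R q 0 = (q - α - α ^ 2) / 2 := by linarith
      have e1 : R q 1 = (q - α - α ^ 2) / 2 := by linarith
      exact ⟨⟨hc2.le, hq.2⟩, e0, e1, e2, e3⟩

set_option maxHeartbeats 1000000 in
lemma pieceS_lemma (β : ℝ) (hβ : 1 < β) (S : ℝ → Fin 4 → ℝ) (hS : SFull β S) :
    ∀ q ∈ Icc (1 + 3 * β) (β * (1 + 3 * β)),
      ((1 + 3 * β ≤ q ∧ q ≤ 1 + β + 2 * β ^ 2) ∧ S q 0 = 1 ∧ S q 1 = β ∧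
        S q 2 = (q - 1 - β) / 2 ∧ S q 3 = (q - 1 - β) / 2) ∨
      ((1 + β + 2 * β ^ 2 ≤ q ∧ q ≤ 2 * β + 2 * β ^ 2) ∧ S q 0 = q - β - 2 * β ^ 2 ∧
        S q 1 = β ∧ S q 2 = β ^ 2 ∧ S q 3 = β ^ 2) ∨
      ((2 * β + 2 * β ^ 2 ≤ q ∧ q ≤ β * (1 + 3 * β)) ∧ S q 0 = β ∧
        S q 1 = q - β - 2 * β ^ 2 ∧ S q 2 = β ^ 2 ∧ S q 3 = β ^ 2) := by
  obtain ⟨⟨-, -, hg1S, hg2S, -⟩, h23S, -, hB1, hB2, hB3, hscS⟩ := hS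
  have oS1 : (1:ℝ) + 3 * β ≤ 1 + β + 2 * β ^ 2 := by nlinarith
  have oS2 : (1:ℝ) + β + 2 * β ^ 2 ≤ 2 * β + 2 * β ^ 2 := by linarith
  have oS3 : (2:ℝ) * β + 2 * β ^ 2 ≤ β * (1 + 3 * β) := by nlinarith
  have monS : ∀ i, MonotoneOn (fun q => S q i) (Ici (1 + 3 * β)) := fun i => (hg2S i).1
  have sumS : ∀ q, 1 + 3 * β ≤ q → S q 0 + S q 1 + S q 2 + S q 3 = q := by
    intro q hq
    have := (hg1S q (Set.mem_Ici.mpr hq)).2.2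
    rwa [Fin.sum_univ_four] at this
  have hB1top : S (β * (1 + 3 * β)) = β • ptB1 β := by rw [hscS (1 + 3 * β) le_rfl, hB1]
  have mS0 : (1 + 3 * β : ℝ) ∈ Ici (1 + 3 * β) := Set.mem_Ici.mpr le_rfl
  have mS1 : (1 + β + 2 * β ^ 2 : ℝ) ∈ Ici (1 + 3 * β) := Set.mem_Ici.mpr oS1
  have mS2 : (2 * β + 2 * β ^ 2 : ℝ) ∈ Ici (1 + 3 * β) := Set.mem_Ici.mpr (le_trans oS1 oS2)
  have mS3 : (β * (1 + 3 * β) : ℝ) ∈ Ici (1 + 3 * β) :=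
    Set.mem_Ici.mpr (le_trans (le_trans oS1 oS2) oS3)
  have b10 : S (1 + 3 * β) 0 = 1 := congrFun hB1 0
  have b11 : S (1 + 3 * β) 1 = β := congrFun hB1 1
  have b20 : S (1 + β + 2 * β ^ 2) 0 = 1 := congrFun hB2 0
  have b21 : S (1 + β + 2 * β ^ 2) 1 = β := congrFun hB2 1
  have b22 : S (1 + β + 2 * β ^ 2) 2 = β ^ 2 := congrFun hB2 2
  have b23 : S (1 + β + 2 * β ^ 2) 3 = β ^ 2 := congrFun hB2 3
  have b30 : S (2 * β + 2 * β ^ 2) 0 = β := congrFun hB3 0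
  have b31 : S (2 * β + 2 * β ^ 2) 1 = β := congrFun hB3 1
  have b32 : S (2 * β + 2 * β ^ 2) 2 = β ^ 2 := congrFun hB3 2
  have b33 : S (2 * β + 2 * β ^ 2) 3 = β ^ 2 := congrFun hB3 3
  have b40 : S (β * (1 + 3 * β)) 0 = β := by rw [hB1top]; show β * 1 = β; ring
  have b42 : S (β * (1 + 3 * β)) 2 = β ^ 2 := by rw [hB1top]; show β * β = β ^ 2; ring
  have b43 : S (β * (1 + 3 * β)) 3 = β ^ 2 := by rw [hB1top]; show β * β = β ^ 2; ring
  intro q hq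
  have hmq : q ∈ Ici (1 + 3 * β) := Set.mem_Ici.mpr hq.1
  by_cases hc1 : q ≤ 1 + β + 2 * β ^ 2
  · left
    have e0 : S q 0 = 1 := by
      have h : S q 0 = S (1 + 3 * β) 0 :=
        monoConst (monS 0) mS0 mS1 hmq hq.1 hc1 (b10.trans b20.symm)
      rw [h, b10]
    have e1 : S q 1 = β := by
      have h : S q 1 = S (1 + 3 * β) 1 :=
        monoConst (monS 1) mS0 mS1 hmq hq.1 hc1 (b11.trans b21.symm)
      rw [h, b11]
    have e23 : S q 2 = S q 3 := h23S q hq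
    have hs := sumS q hq.1
    have e2 : S q 2 = (q - 1 - β) / 2 := by linarith
    have e3 : S q 3 = (q - 1 - β) / 2 := by linarith
    exact ⟨⟨hq.1, hc1⟩, e0, e1, e2, e3⟩
  · push_neg at hc1
    by_cases hc2 : q ≤ 2 * β + 2 * β ^ 2
    · right; left
      have e1 : S q 1 = β := by
        have h : S q 1 = S (1 + β + 2 * β ^ 2) 1 :=
          monoConst (monS 1) mS1 mS2 hmq hc1.le hc2 (b21.trans b31.symm)
        rw [h, b21]
      have e2 : S q 2 = β ^ 2 := by
        have h : S q 2 = S (1 + β + 2 * β ^ 2) 2 :=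
          monoConst (monS 2) mS1 mS2 hmq hc1.le hc2 (b22.trans b32.symm)
        rw [h, b22]
      have e3 : S q 3 = β ^ 2 := by
        have h : S q 3 = S (1 + β + 2 * β ^ 2) 3 :=
          monoConst (monS 3) mS1 mS2 hmq hc1.le hc2 (b23.trans b33.symm)
        rw [h, b23]
      have hs := sumS q hq.1
      have e0 : S q 0 = q - β - 2 * β ^ 2 := by linarith
      exact ⟨⟨hc1.le, hc2⟩, e0, e1, e2, e3⟩
    · push_neg at hc2
      right; right
      have e0 : S q 0 = β := by
        have h : S q 0 = S (2 * β + 2 * β ^ 2) 0 :=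
          monoConst (monS 0) mS2 mS3 hmq hc2.le hq.2 (b30.trans b40.symm)
        rw [h, b30]
      have e2 : S q 2 = β ^ 2 := by
        have h : S q 2 = S (2 * β + 2 * β ^ 2) 2 :=
          monoConst (monS 2) mS2 mS3 hmq hc2.le hq.2 (b32.trans b42.symm)
        rw [h, b32]
      have e3 : S q 3 = β ^ 2 := by
        have h : S q 3 = S (2 * β + 2 * β ^ 2) 3 :=
          monoConst (monS 3) mS2 mS3 hmq hc2.le hq.2 (b33.trans b43.symm)
        rw [h, b33]
      have hs := sumS q hq.1
      have e1 : S q 1 = q - β - 2 * β ^ 2 := by linarith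
      exact ⟨⟨hc2.le, hq.2⟩, e0, e1, e2, e3⟩

set_option maxHeartbeats 2000000 in
lemma muR_lemma (α β : ℝ) (hα : 1 < α) (hαβ : α < β) (R : ℝ → Fin 4 → ℝ) (hR : RFull α R) :
    muVec (Tfive α β) R =
      ![0, 0, 0, α * (1 - α) / (2 + α + α ^ 2), (α - 1) / (2 + 2 * α)] := by
  have hβ : 1 < β := hα.trans hαβ
  have hα0 : (0:ℝ) < α := by linarith
  have ha1 : (0:ℝ) ≤ α - 1 := by linarith
  have hb1 : (0:ℝ) ≤ β - 1 := by linarith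
  have hpieceR := pieceR_lemma α hα R hR
  obtain ⟨-, -, -, hA1, hA2, hA3, hscR⟩ := hR
  have a10 : R (3 + α) 0 = 1 := congrFun hA1 0
  have a11 : R (3 + α) 1 = 1 := congrFun hA1 1
  have a12 : R (3 + α) 2 = 1 := congrFun hA1 2
  have a13 : R (3 + α) 3 = α := congrFun hA1 3
  have a21 : R (2 + 2 * α) 1 = 1 := congrFun hA2 1
  have a23 : R (2 + 2 * α) 3 = α := congrFun hA2 3
  have a30 : R (2 + α + α ^ 2) 0 = 1 := congrFun hA3 0
  have a31 : R (2 + α + α ^ 2) 1 = 1 := congrFun hA3 1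
  have a32 : R (2 + α + α ^ 2) 2 = α := congrFun hA3 2
  have a33 : R (2 + α + α ^ 2) 3 = α ^ 2 := congrFun hA3 3
  have oR1 : (3:ℝ) + α ≤ 2 + 2 * α := by linarith
  have oR2 : (2:ℝ) + 2 * α ≤ 2 + α + α ^ 2 := by nlinarith
  have oR3 : (2:ℝ) + α + α ^ 2 ≤ α * (3 + α) := by nlinarith
  have haR : (0:ℝ) < 3 + α := by linarith
  have qsR1 : (3 + α : ℝ) ∈ Icc (3 + α) (α * (3 + α)) :=
    ⟨le_rfl, le_trans (le_trans oR1 oR2) oR3⟩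
  have qsR2 : (2 + 2 * α : ℝ) ∈ Icc (3 + α) (α * (3 + α)) := ⟨oR1, le_trans oR2 oR3⟩
  have qsR3 : (2 + α + α ^ 2 : ℝ) ∈ Icc (3 + α) (α * (3 + α)) := ⟨le_trans oR1 oR2, oR3⟩
  have hd3 : (0:ℝ) < 2 + α + α ^ 2 := by positivity
  have hd4 : (0:ℝ) < 2 + 2 * α := by linarith
  have LR0 : liminf (fun q : ℝ => Tfive α β (R q) 0 / q) atTop = 0 := by
    refine liminf_self_similar α (3 + α) hα haR R hscR (fun x => Tfive α β x 0)
      (Tfive_smul α β 0) 0 ?_ (3 + α) qsR1 ?_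
    · intro q hq
      show (0:ℝ) * q ≤ Tfive α β (R q) 0
      rcases hpieceR q hq with ⟨⟨hq1, hq2⟩, e0, e1, e2, e3⟩ | ⟨⟨hq1, hq2⟩, e0, e1, e2, e3⟩ |
        ⟨⟨hq1, hq2⟩, e0, e1, e2, e3⟩
      · rw [Tfive0, e0, e1, e3]; nlinarith
      · rw [Tfive0, e0, e1, e3]
        nlinarith [mul_nonneg hb1 (by linarith : (0:ℝ) ≤ q - 2 - 2 * α)]
      · rw [Tfive0, e0, e1, e3]
        nlinarith [mul_nonneg (mul_nonneg hα0.le hb1)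
          (by nlinarith : (0:ℝ) ≤ 3 * α + α ^ 2 - q)]
    · show Tfive α β (R (3 + α)) 0 = 0 * (3 + α)
      rw [Tfive0, a10, a11, a13]; ring
  have LR1 : liminf (fun q : ℝ => Tfive α β (R q) 1 / q) atTop = 0 := by
    refine liminf_self_similar α (3 + α) hα haR R hscR (fun x => Tfive α β x 1)
      (Tfive_smul α β 1) 0 ?_ (3 + α) qsR1 ?_
    · intro q hq
      show (0:ℝ) * q ≤ Tfive α β (R q) 1
      rcases hpieceR q hq with ⟨⟨hq1, hq2⟩, e0, e1, e2, e3⟩ | ⟨⟨hq1, hq2⟩, e0, e1, e2, e3⟩ |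
        ⟨⟨hq1, hq2⟩, e0, e1, e2, e3⟩
      · rw [Tfive1, e0, e1, e2, e3]
        nlinarith [mul_nonneg (mul_nonneg hα0.le hb1) (by linarith : (0:ℝ) ≤ q - 3 - α)]
      · rw [Tfive1, e0, e1, e2, e3]
        nlinarith [mul_nonneg hb1 (by linarith : (0:ℝ) ≤ 2 + α + α ^ 2 - q)]
      · rw [Tfive1, e0, e1, e2, e3]; nlinarith
    · show Tfive α β (R (3 + α)) 1 = 0 * (3 + α)
      rw [Tfive1, a10, a11, a12, a13]; ring
  have LR2 : liminf (fun q : ℝ => Tfive α β (R q) 2 / q) atTop = 0 := by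
    refine liminf_self_similar α (3 + α) hα haR R hscR (fun x => Tfive α β x 2)
      (Tfive_smul α β 2) 0 ?_ (2 + α + α ^ 2) qsR3 ?_
    · intro q hq
      show (0:ℝ) * q ≤ Tfive α β (R q) 2
      rcases hpieceR q hq with ⟨⟨hq1, hq2⟩, e0, e1, e2, e3⟩ | ⟨⟨hq1, hq2⟩, e0, e1, e2, e3⟩ |
        ⟨⟨hq1, hq2⟩, e0, e1, e2, e3⟩
      · rw [Tfive2, e0, e1, e2, e3]
        nlinarith [mul_nonneg hb1 (by linarith : (0:ℝ) ≤ q - 3 - α),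
          mul_nonneg hb1 (sq_nonneg (α - 1))]
      · rw [Tfive2, e0, e1, e2, e3]
        nlinarith [mul_nonneg hb1 (by linarith : (0:ℝ) ≤ 2 + α + α ^ 2 - q)]
      · rw [Tfive2, e0, e1, e2, e3]
        nlinarith [mul_nonneg (mul_nonneg (mul_nonneg hα0.le ha1) hb1)
          (by linarith : (0:ℝ) ≤ q - 2 - α - α ^ 2)]
    · show Tfive α β (R (2 + α + α ^ 2)) 2 = 0 * (2 + α + α ^ 2)
      rw [Tfive2, a30, a31, a32, a33]; ring
  have LR3 : liminf (fun q : ℝ => Tfive α β (R q) 3 / q) atTop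
      = α * (1 - α) / (2 + α + α ^ 2) := by
    refine liminf_self_similar α (3 + α) hα haR R hscR (fun x => Tfive α β x 3)
      (Tfive_smul α β 3) (α * (1 - α) / (2 + α + α ^ 2)) ?_ (2 + α + α ^ 2) qsR3 ?_
    · intro q hq
      show α * (1 - α) / (2 + α + α ^ 2) * q ≤ Tfive α β (R q) 3
      rw [div_mul_eq_mul_div, div_le_iff₀ hd3]
      rcases hpieceR q hq with ⟨⟨hq1, hq2⟩, e0, e1, e2, e3⟩ | ⟨⟨hq1, hq2⟩, e0, e1, e2, e3⟩ |
        ⟨⟨hq1, hq2⟩, e0, e1, e2, e3⟩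
      · rw [Tfive3, e2, e3]
        nlinarith [sq_nonneg (α - 1),
          mul_nonneg (by positivity : (0:ℝ) ≤ 1 + α ^ 2) (by linarith : (0:ℝ) ≤ q - 3 - α)]
      · rw [Tfive3, e2, e3]
        nlinarith [mul_nonneg (by linarith : (0:ℝ) ≤ 1 + α)
          (by linarith : (0:ℝ) ≤ 2 + α + α ^ 2 - q)]
      · rw [Tfive3, e2, e3]
        nlinarith [mul_nonneg (mul_nonneg hα0.le ha1)
          (by linarith : (0:ℝ) ≤ q - 2 - α - α ^ 2)]
    · show Tfive α β (R (2 + α + α ^ 2)) 3 = α * (1 - α) / (2 + α + α ^ 2) * (2 + α + α ^ 2)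
      rw [Tfive3, a32, a33]
      field_simp
  have LR4 : liminf (fun q : ℝ => Tfive α β (R q) 4 / q) atTop = (α - 1) / (2 + 2 * α) := by
    refine liminf_self_similar α (3 + α) hα haR R hscR (fun x => Tfive α β x 4)
      (Tfive_smul α β 4) ((α - 1) / (2 + 2 * α)) ?_ (2 + 2 * α) qsR2 ?_
    · intro q hq
      show (α - 1) / (2 + 2 * α) * q ≤ Tfive α β (R q) 4
      rw [div_mul_eq_mul_div, div_le_iff₀ hd4]
      rcases hpieceR q hq with ⟨⟨hq1, hq2⟩, e0, e1, e2, e3⟩ | ⟨⟨hq1, hq2⟩, e0, e1, e2, e3⟩ |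
        ⟨⟨hq1, hq2⟩, e0, e1, e2, e3⟩
      · rw [Tfive4, e1, e3]
        nlinarith [mul_nonneg ha1 (by linarith : (0:ℝ) ≤ 2 + 2 * α - q)]
      · rw [Tfive4, e1, e3]
        nlinarith [mul_nonneg (by linarith : (0:ℝ) ≤ 3 + α)
          (by linarith : (0:ℝ) ≤ q - 2 - 2 * α)]
      · rw [Tfive4, e1, e3]
        nlinarith [mul_nonneg hα0.le (sq_nonneg (α - 1)),
          mul_nonneg hα0.le (by nlinarith : (0:ℝ) ≤ 3 * α + α ^ 2 - q)]
    · show Tfive α β (R (2 + 2 * α)) 4 = (α - 1) / (2 + 2 * α) * (2 + 2 * α)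
      rw [Tfive4, a21, a23]
      field_simp
      ring
  funext i
  fin_cases i
  · exact LR0
  · exact LR1
  · exact LR2
  · exact LR3
  · exact LR4

set_option maxHeartbeats 2000000 in
lemma muS_lemma (α β : ℝ) (hα : 1 < α) (hαβ : α < β) (S : ℝ → Fin 4 → ℝ) (hS : SFull β S) :
    muVec (Tfive α β) S = ![0, 0, 0, 0, 0] := by
  have hβ : 1 < β := hα.trans hαβ
  have hα0 : (0:ℝ) < α := by linarith
  have hβ0 : (0:ℝ) < β := by linarith
  have ha1 : (0:ℝ) ≤ α - 1 := by linarith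
  have hb1 : (0:ℝ) ≤ β - 1 := by linarith
  have hba : (0:ℝ) ≤ β - α := by linarith
  have hpieceS := pieceS_lemma β hβ S hS
  obtain ⟨-, -, -, hB1, hB2, hB3, hscS⟩ := hS
  have b10 : S (1 + 3 * β) 0 = 1 := congrFun hB1 0
  have b11 : S (1 + 3 * β) 1 = β := congrFun hB1 1
  have b12 : S (1 + 3 * β) 2 = β := congrFun hB1 2
  have b13 : S (1 + 3 * β) 3 = β := congrFun hB1 3
  have oS1 : (1:ℝ) + 3 * β ≤ 1 + β + 2 * β ^ 2 := by nlinarith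
  have oS2 : (1:ℝ) + β + 2 * β ^ 2 ≤ 2 * β + 2 * β ^ 2 := by linarith
  have oS3 : (2:ℝ) * β + 2 * β ^ 2 ≤ β * (1 + 3 * β) := by nlinarith
  have haS : (0:ℝ) < 1 + 3 * β := by linarith
  have qsS1 : (1 + 3 * β : ℝ) ∈ Icc (1 + 3 * β) (β * (1 + 3 * β)) :=
    ⟨le_rfl, le_trans (le_trans oS1 oS2) oS3⟩
  have LS : ∀ i : Fin 5, liminf (fun q : ℝ => Tfive α β (S q) i / q) atTop = 0 := by
    have hlbS : ∀ i : Fin 5, ∀ q ∈ Icc (1 + 3 * β) (β * (1 + 3 * β)),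
        (0:ℝ) * q ≤ Tfive α β (S q) i := by
      intro i q hq
      rcases hpieceS q hq with ⟨⟨hq1, hq2⟩, e0, e1, e2, e3⟩ | ⟨⟨hq1, hq2⟩, e0, e1, e2, e3⟩ |
        ⟨⟨hq1, hq2⟩, e0, e1, e2, e3⟩
      · fin_cases i
        · show (0:ℝ) * q ≤ Tfive α β (S q) 0
          rw [Tfive0, e0, e1, e3]
          nlinarith [mul_nonneg hb1 (by linarith : (0:ℝ) ≤ q - 1 - 3 * β)]
        · show (0:ℝ) * q ≤ Tfive α β (S q) 1
          rw [Tfive1, e0, e1, e2, e3]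
          nlinarith [mul_nonneg (mul_nonneg ha1 hb1) (by linarith : (0:ℝ) ≤ q - 1 - 3 * β)]
        · show (0:ℝ) * q ≤ Tfive α β (S q) 2
          rw [Tfive2, e0, e1, e2, e3]; nlinarith
        · show (0:ℝ) * q ≤ Tfive α β (S q) 3
          rw [Tfive3, e2, e3]; nlinarith
        · show (0:ℝ) * q ≤ Tfive α β (S q) 4
          rw [Tfive4, e1, e3]; nlinarith
      · fin_cases i
        · show (0:ℝ) * q ≤ Tfive α β (S q) 0
          rw [Tfive0, e0, e1, e3]
          nlinarith [mul_nonneg (mul_nonneg hβ0.le hb1) hba,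
            mul_nonneg (mul_nonneg ha1 hβ0.le) (by linarith : (0:ℝ) ≤ 2 * β + 2 * β ^ 2 - q)]
        · show (0:ℝ) * q ≤ Tfive α β (S q) 1
          rw [Tfive1, e0, e1, e2, e3]
          nlinarith [mul_nonneg (mul_nonneg ha1 hβ0.le)
              (by linarith : (0:ℝ) ≤ q - 1 - β - 2 * β ^ 2),
            mul_nonneg (mul_nonneg ha1 hβ0.le) (sq_nonneg (β - 1))]
        · show (0:ℝ) * q ≤ Tfive α β (S q) 2
          rw [Tfive2, e0, e1, e2, e3]
          nlinarith [mul_nonneg (mul_nonneg (mul_nonneg hα0.le ha1) hβ0.le)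
            (by linarith : (0:ℝ) ≤ q - 1 - β - 2 * β ^ 2)]
        · show (0:ℝ) * q ≤ Tfive α β (S q) 3
          rw [Tfive3, e2, e3]; nlinarith
        · show (0:ℝ) * q ≤ Tfive α β (S q) 4
          rw [Tfive4, e1, e3]
          nlinarith [mul_nonneg hβ0.le hb1]
      · have hq2' : q ≤ β + 3 * β ^ 2 := by nlinarith
        fin_cases i
        · show (0:ℝ) * q ≤ Tfive α β (S q) 0
          rw [Tfive0, e0, e1, e3]
          nlinarith [mul_nonneg hba (by linarith : (0:ℝ) ≤ β + 3 * β ^ 2 - q)]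
        · show (0:ℝ) * q ≤ Tfive α β (S q) 1
          rw [Tfive1, e0, e1, e2, e3]
          nlinarith [mul_nonneg (mul_nonneg ha1 hβ0.le)
            (by linarith : (0:ℝ) ≤ β + 3 * β ^ 2 - q)]
        · show (0:ℝ) * q ≤ Tfive α β (S q) 2
          rw [Tfive2, e0, e1, e2, e3]
          nlinarith [mul_nonneg (mul_nonneg hα0.le ha1)
            (by linarith : (0:ℝ) ≤ β + 3 * β ^ 2 - q)]
        · show (0:ℝ) * q ≤ Tfive α β (S q) 3
          rw [Tfive3, e2, e3]; nlinarith
        · show (0:ℝ) * q ≤ Tfive α β (S q) 4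
          rw [Tfive4, e1, e3]; nlinarith
    have heqS : ∀ i : Fin 5, Tfive α β (S (1 + 3 * β)) i = 0 * (1 + 3 * β) := by
      intro i
      fin_cases i
      · show Tfive α β (S (1 + 3 * β)) 0 = 0 * (1 + 3 * β)
        rw [Tfive0, b10, b11, b13]; ring
      · show Tfive α β (S (1 + 3 * β)) 1 = 0 * (1 + 3 * β)
        rw [Tfive1, b10, b11, b12, b13]; ring
      · show Tfive α β (S (1 + 3 * β)) 2 = 0 * (1 + 3 * β)
        rw [Tfive2, b10, b11, b12, b13]; ring
      · show Tfive α β (S (1 + 3 * β)) 3 = 0 * (1 + 3 * β)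
        rw [Tfive3, b12, b13]; ring
      · show Tfive α β (S (1 + 3 * β)) 4 = 0 * (1 + 3 * β)
        rw [Tfive4, b11, b13]; ring
    intro i
    exact liminf_self_similar β (1 + 3 * β) hβ haS S hscS (fun x => Tfive α β x i)
      (Tfive_smul α β i) 0 (hlbS i) (1 + 3 * β) qsS1 (heqS i)
  funext i
  fin_cases i
  · exact LS 0
  · exact LS 1
  · exact LS 2
  · exact LS 3
  · exact LS 4

theorem stmt_13 (α β : ℝ) (hα : 1 < α) (hαβ : α < β)
    (R S : ℝ → Fin 4 → ℝ) (hR : RFull α R) (hS : SFull β S) :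
    muVec (Tfive α β) R =
      ![0, 0, 0, α * (1 - α) / (2 + α + α ^ 2), (α - 1) / (2 + 2 * α)] ∧
    muVec (Tfive α β) S = ![0, 0, 0, 0, 0] ∧
    (fun i => min (muVec (Tfive α β) R i) (muVec (Tfive α β) S i)) =
      ![0, 0, 0, α * (1 - α) / (2 + α + α ^ 2), 0] := by
  have hα0 : (0:ℝ) < α := by linarith
  have hmuR := muR_lemma α β hα hαβ R hR
  have hmuS := muS_lemma α β hα hαβ S hS
  refine ⟨hmuR, hmuS, ?_⟩
  rw [hmuR, hmuS]
  funext i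
  fin_cases i
  · exact min_self 0
  · exact min_self 0
  · exact min_self 0
  · show min (α * (1 - α) / (2 + α + α ^ 2)) 0 = α * (1 - α) / (2 + α + α ^ 2)
    exact min_eq_left (div_nonpos_iff.mpr (Or.inr ⟨by nlinarith, by positivity⟩))
  · show min ((α - 1) / (2 + 2 * α)) 0 = 0
    exact min_eq_right (div_nonneg (by linarith) (by linarith))
end
end
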